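/- Let B be a Noetherian local ring with maximal ideal m_B, let C be a B-algebra, let M be a B-module of finite length l, and let N = M ⊗_B C. If C/m_B·C has finite length as a C-module, then N has finite length as a C-module and l_C(N) ≤ l_B(M) · l_C(C/m_B·C). If moreover B → C is flat, equality holds. -/

import Mathlib

open IsLocalRing TensorProduct

/-- The length of a module, as the Krull dimension of its lattice of submodules. -/
noncomputable def moduleLength (R : Type*) [Ring R] (M : Type*) [AddCommGroup M]
    [Module R M] : WithBot ℕ∞ :=
  Order.krullDim (Submodule R M)

section OrderAux

variable {L : Type*}

lemma aux_enat_eq_top {x : ℕ∞} (h : ∀ n : ℕ, (n : ℕ∞) ≤ x) : x = ⊤ := by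
  cases x using ENat.recTopCoe with
  | top => rfl
  | coe k =>
    have := h (k + 1)
    rw [Nat.cast_le] at this
    omega

lemma aux_height_add_one_le [Preorder L] {x y : L} (h : x < y) :
    Order.height x + 1 ≤ Order.height y := by
  rcases eq_or_ne (Order.height x) ⊤ with hx | hx
  · have hy : Order.height y = ⊤ :=
      top_le_iff.mp (hx ▸ Order.height_mono h.le)
    rw [hx, hy]; simp
  · exact (ENat.add_one_le_iff hx).mpr (Order.height_strictMono h (lt_top_iff_ne_top.mpr hx))

variable [Lattice L] [IsModularLattice L]

lemma aux_chain_split (a : L) (p : LTSeries L) :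
    ∃ m n : ℕ, m + n = p.length ∧
      (m : ℕ∞) ≤ Order.height (p.last ⊓ a) ∧
      (n : ℕ∞) ≤ Order.height (⟨p.last ⊔ a, le_sup_right⟩ : {x : L // a ≤ x}) := by
  obtain ⟨k, hlen⟩ : ∃ k, p.length = k := ⟨_, rfl⟩
  induction k generalizing p with
  | zero => exact ⟨0, 0, by omega, by simp, by simp⟩
  | succ k ih =>
    have hne : p.length ≠ 0 := by omega
    have hel : p.eraseLast.length = p.length - 1 := rfl
    obtain ⟨m, n, hmn, hm, hn⟩ := ih p.eraseLast (by
      show p.length - 1 = k; omega)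
    have hlt : p.eraseLast.last < p.last := p.eraseLast_last_rel_last hne
    rcases (sup_le_sup_right hlt.le a).lt_or_eq with hsup | hsup
    · refine ⟨m, n + 1, by omega, ?_, ?_⟩
      · exact hm.trans (Order.height_mono (inf_le_inf_right a hlt.le))
      · push_cast
        calc (n : ℕ∞) + 1 ≤ _ + 1 := add_le_add_left hn 1
          _ ≤ _ := aux_height_add_one_le (Subtype.mk_lt_mk.mpr hsup)
    · have hinf : p.eraseLast.last ⊓ a < p.last ⊓ a :=
        inf_lt_inf_of_lt_of_sup_le_sup hlt hsup.ge
      refine ⟨m + 1, n, by omega, ?_, ?_⟩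
      · push_cast
        calc (m : ℕ∞) + 1 ≤ _ + 1 := add_le_add_left hm 1
          _ ≤ _ := aux_height_add_one_le hinf
      · exact hn.trans (Order.height_mono (Subtype.mk_le_mk.mpr
          (sup_le_sup_right hlt.le a)))

lemma aux_height_top_eq_add [BoundedOrder L] (a : L) :
    Order.height (⊤ : L) =
      Order.height a + Order.height (⟨⊤, le_top⟩ : {x : L // a ≤ x}) := by
  apply le_antisymm
  · apply Order.height_le
    intro p hp
    obtain ⟨m, n, hmn, hm, hn⟩ := aux_chain_split a p
    rw [hp, top_inf_eq] at hm
    rw [show (⟨p.last ⊔ a, le_sup_right⟩ : {x : L // a ≤ x}) = ⟨⊤, le_top⟩ from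
      Subtype.ext (by show p.last ⊔ a = ⊤; rw [hp, top_sup_eq])] at hn
    calc (p.length : ℕ∞) = (m : ℕ∞) + n := by exact_mod_cast hmn.symm
      _ ≤ _ := add_le_add hm hn
  · have key : ∀ m n : ℕ, (m : ℕ∞) ≤ Order.height a →
        (n : ℕ∞) ≤ Order.height (⟨⊤, le_top⟩ : {x : L // a ≤ x}) →
        (m : ℕ∞) + n ≤ Order.height (⊤ : L) := by
      intro m n hm hn
      obtain ⟨p, hpl, hplen⟩ := Order.exists_series_of_le_height a hm
      obtain ⟨q', hql, hqlen⟩ := Order.exists_series_of_le_height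
        (⟨⊤, le_top⟩ : {x : L // a ≤ x}) hn
      let q : LTSeries L := q'.map Subtype.val fun _ _ h => h
      have hqlast : q.last = ⊤ := by
        show (q'.last : L) = ⊤
        rw [hql]
      have hqhead : a ≤ q.head := q'.head.2
      rcases eq_or_lt_of_le hqhead with heq | hlt
      · have hconn : p.last = q.head := by rw [hpl, ← heq]
        have hclen : (p.smash q hconn).length = m + n := by
          show p.length + q'.length = m + n
          rw [hplen, hqlen]
        have hclast : (p.smash q hconn).last = ⊤ := by
          rw [RelSeries.last_smash, hqlast]
        calc ((m : ℕ∞) + n) = ((p.smash q hconn).length : ℕ∞) := by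
              rw [hclen]; push_cast; rfl
          _ ≤ _ := Order.length_le_height hclast.le
      · have hconn : p.last < q.head := by rw [hpl]; exact hlt
        have hclen : (p.append q hconn).length = m + n + 1 := by
          show p.length + q'.length + 1 = m + n + 1
          rw [hplen, hqlen]
        have hclast : (p.append q hconn).last = ⊤ := by
          rw [RelSeries.last_append, hqlast]
        calc ((m : ℕ∞) + n) ≤ ((m + n + 1 : ℕ) : ℕ∞) := by push_cast; exact le_self_add
          _ = ((p.append q hconn).length : ℕ∞) := by rw [hclen]
          _ ≤ _ := Order.length_le_height hclast.le
    rcases eq_or_ne (Order.height a) ⊤ with h | h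
    · have : Order.height (⊤ : L) = ⊤ := by
        apply aux_enat_eq_top
        intro n
        simpa using key n 0 (by rw [h]; exact le_top) (by simp)
      rw [this]; exact le_top
    rcases eq_or_ne (Order.height (⟨⊤, le_top⟩ : {x : L // a ≤ x})) ⊤ with h2 | h2
    · have : Order.height (⊤ : L) = ⊤ := by
        apply aux_enat_eq_top
        intro n
        simpa using key 0 n (by simp) (by rw [h2]; exact le_top)
      rw [this]; exact le_top
    · lift Order.height a to ℕ using h with m hm
      lift Order.height (⟨⊤, le_top⟩ : {x : L // a ≤ x}) to ℕ using h2 with n hn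
      exact_mod_cast key m n le_rfl le_rfl

lemma aux_height_subtype_val {a : L} (x : {y : L // y ≤ a}) :
    Order.height x = Order.height x.val := by
  apply le_antisymm
  · exact Order.height_le_height_apply_of_strictMono
      (fun y : {y : L // y ≤ a} => (y : L)) (fun _ _ h => h) x
  · apply Order.height_le
    intro p hp
    have hle : ∀ i, p i ≤ a := fun i => by
      calc p i ≤ p.last := p.monotone (Fin.le_last i)
        _ = x.val := hp
        _ ≤ a := x.2
    let p' : LTSeries {y : L // y ≤ a} :=
      ⟨p.length, fun i => ⟨p i, hle i⟩, fun i => (Subtype.mk_lt_mk.mpr (p.step i) :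
        (⟨p i.castSucc, hle _⟩ : {y : L // y ≤ a}) < ⟨p i.succ, hle _⟩)⟩
    have h1 : p'.last = x := Subtype.ext hp
    calc (p.length : ℕ∞) = (p'.length : ℕ∞) := rfl
      _ ≤ Order.height p'.last := Order.length_le_height_last
      _ = _ := by rw [h1]

end OrderAux

section ModuleAux

variable (R : Type*) [Ring R]

/-- length valued in `ℕ∞` -/
noncomputable def mlen (M : Type*) [AddCommGroup M] [Module R M] : ℕ∞ :=
  Order.height (⊤ : Submodule R M)

variable {M N : Type*} [AddCommGroup M] [Module R M] [AddCommGroup N] [Module R N]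

lemma moduleLength_eq_mlen : moduleLength R M = (mlen R M : WithBot ℕ∞) := by
  apply le_antisymm
  · rw [moduleLength, Order.krullDim_eq_iSup_length]
    exact WithBot.coe_le_coe.mpr (iSup_le fun p => Order.length_le_height le_top)
  · exact Order.height_le_krullDim _

variable {R}

lemma mlen_eq_of_linearEquiv (e : M ≃ₗ[R] N) : mlen R M = mlen R N := by
  have h := Order.height_orderIso (Submodule.orderIsoMapComap e) ⊤
  rw [OrderIso.map_top] at h
  exact h.symm

lemma mlen_additive (P : Submodule R M) :
    mlen R M = mlen R P + mlen R (M ⧸ P) := by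
  have h1 : mlen R P = Order.height P := by
    have := Order.height_orderIso (Submodule.MapSubtype.orderIso P) ⊤
    rw [show (Submodule.MapSubtype.orderIso P) ⊤ = ⟨P, le_rfl⟩ from
      Subtype.ext (Submodule.map_subtype_top P)] at this
    rw [mlen, ← this, aux_height_subtype_val]
  have h2 : mlen R (M ⧸ P) =
      Order.height (⟨⊤, le_top⟩ : {x : Submodule R M // P ≤ x}) := by
    have := Order.height_orderIso (Submodule.comapMkQRelIso P) ⊤
    rw [show (Submodule.comapMkQRelIso P) ⊤ = ⟨⊤, show P ≤ ⊤ from le_top⟩ from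
      Subtype.ext (Submodule.comap_top _)] at this
    rw [mlen]
    exact this.symm
  rw [h1, h2, mlen]
  exact aux_height_top_eq_add P

lemma mlen_eq_zero [Subsingleton M] : mlen R M = 0 := by
  rw [mlen, Order.height_eq_zero]
  intro b _
  exact le_of_eq (Subsingleton.elim _ _)

lemma mlen_eq_one [IsSimpleModule R M] : mlen R M = 1 := by
  apply le_antisymm
  · rw [mlen]
    apply Order.height_le
    intro p _
    by_contra hlen
    push_cast at hlen
    have h2 : 2 ≤ p.length := by
      by_contra h
      exact hlen (by exact_mod_cast Nat.le_of_lt_succ (by omega))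
    have h0 : p (Fin.castSucc (⟨0, by omega⟩ : Fin p.length)) <
        p (Fin.succ (⟨0, by omega⟩ : Fin p.length)) := p.step ⟨0, by omega⟩
    have h1 : p (Fin.castSucc (⟨1, by omega⟩ : Fin p.length)) <
        p (Fin.succ (⟨1, by omega⟩ : Fin p.length)) := p.step ⟨1, by omega⟩
    rcases eq_bot_or_eq_top (p ⟨1, by omega⟩) with hb | ht
    · exact not_lt_bot (hb ▸ h0)
    · exact not_top_lt (ht ▸ h1)
  · rw [mlen]
    have hne : Order.height (⊤ : Submodule R M) ≠ 0 := by
      rw [Ne, Order.height_eq_zero]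
      intro h
      exact absurd (h (bot_le : (⊥ : Submodule R M) ≤ ⊤)) (by simp)
    exact ENat.one_le_iff_ne_zero.mpr hne

lemma mlen_le_of_surjective (f : M →ₗ[R] N) (hf : Function.Surjective f) :
    mlen R N ≤ mlen R M := by
  rw [← mlen_eq_of_linearEquiv (f.quotKerEquivOfSurjective hf),
    mlen_additive (LinearMap.ker f)]
  exact le_add_self

lemma isFiniteLength_of_submodule_quotient (P : Submodule R M)
    (h1 : IsFiniteLength R P) (h2 : IsFiniteLength R (M ⧸ P)) : IsFiniteLength R M := by
  rw [isFiniteLength_iff_isNoetherian_isArtinian] at h1 h2 ⊢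
  exact ⟨(isNoetherian_iff_submodule_quotient P).mpr ⟨h1.1, h2.1⟩,
    (isArtinian_iff_submodule_quotient P).mpr ⟨h1.2, h2.2⟩⟩

lemma isFiniteLength_of_surjective (f : M →ₗ[R] N) (hf : Function.Surjective f)
    (h : IsFiniteLength R M) : IsFiniteLength R N := by
  rw [isFiniteLength_iff_isNoetherian_isArtinian] at h ⊢
  have := h.1; have := h.2
  exact ⟨isNoetherian_of_surjective f (LinearMap.range_eq_top.mpr hf),
    isArtinian_of_surjective M f hf⟩

end ModuleAux

section TensorQuot

variable {B C : Type*} [CommRing B] [CommRing C] [Algebra B C] (I : Ideal B)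

/-- `C ⊗[B] (B ⧸ I) ≃ₗ[C] C ⧸ I.map (algebraMap B C)` -/
noncomputable def tensorQuotEquiv :
    (C ⊗[B] (B ⧸ I)) ≃ₗ[C] (C ⧸ I.map (algebraMap B C)) := by
  set J : Ideal C := I.map (algebraMap B C)
  refine LinearEquiv.ofLinear
    (LinearMap.liftBaseChange C (Submodule.liftQ I
      ((J.mkQ).restrictScalars B ∘ₗ Algebra.linearMap B C) ?_))
    (Submodule.liftQ J (LinearMap.toSpanSingleton C _ ((1 : C) ⊗ₜ[B] (1 : B ⧸ I))) ?_)
    ?_ ?_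
  · intro b hb
    simp only [LinearMap.mem_ker, LinearMap.comp_apply, Algebra.linearMap_apply,
      LinearMap.restrictScalars_apply, Submodule.mkQ_apply]
    rw [Submodule.Quotient.mk_eq_zero]
    exact Ideal.mem_map_of_mem _ hb
  · rw [Ideal.map_le_iff_le_comap]
    intro b hb
    simp only [Ideal.mem_comap, LinearMap.mem_ker, LinearMap.toSpanSingleton_apply]
    have hb1 : (b • (1 : B ⧸ I)) = Submodule.Quotient.mk b := by
      rw [show (1 : B ⧸ I) = Submodule.Quotient.mk (1 : B) from rfl,
        ← Submodule.Quotient.mk_smul, smul_eq_mul, mul_one]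
    rw [algebraMap_smul, ← TensorProduct.tmul_smul, hb1,
      show (Submodule.Quotient.mk b : B ⧸ I) = 0 from
        (Submodule.Quotient.mk_eq_zero I).mpr hb, TensorProduct.tmul_zero]
  · apply LinearMap.ext
    intro x
    obtain ⟨c, rfl⟩ := Submodule.mkQ_surjective J x
    simp only [LinearMap.comp_apply, Submodule.mkQ_apply, Submodule.liftQ_apply,
      LinearMap.toSpanSingleton_apply, LinearMap.id_apply]
    rw [TensorProduct.smul_tmul', smul_eq_mul, mul_one, LinearMap.liftBaseChange_tmul]
    rw [show (1 : B ⧸ I) = Submodule.Quotient.mk (1 : B) from rfl, Submodule.liftQ_apply]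
    simp only [LinearMap.comp_apply, LinearMap.restrictScalars_apply,
      Algebra.linearMap_apply, map_one, Submodule.mkQ_apply]
    rw [← Submodule.Quotient.mk_smul, smul_eq_mul, mul_one]
  · apply LinearMap.ext
    intro x
    induction x using TensorProduct.induction_on with
    | zero => simp
    | add x y hx hy => simp only [map_add, hx, hy]
    | tmul c m =>
      obtain ⟨b, rfl⟩ := Submodule.mkQ_surjective I m
      simp only [LinearMap.comp_apply, LinearMap.liftBaseChange_tmul, Submodule.mkQ_apply,
        Submodule.liftQ_apply, LinearMap.restrictScalars_apply, Algebra.linearMap_apply,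
        LinearMap.id_apply]
      rw [map_smul, Submodule.liftQ_apply, LinearMap.toSpanSingleton_apply]
      rw [algebraMap_smul, ← TensorProduct.tmul_smul]
      have hb1 : (b • (1 : B ⧸ I)) = Submodule.Quotient.mk b := by
        rw [show (1 : B ⧸ I) = Submodule.Quotient.mk (1 : B) from rfl,
          ← Submodule.Quotient.mk_smul, smul_eq_mul, mul_one]
      rw [hb1, TensorProduct.smul_tmul', smul_eq_mul, mul_one]

end TensorQuot

/-- If `M` is a `B`-module of finite length and `C/m_B C` has finite length over `C`, then the
base change `N = M ⊗_B C` has finite length over `C` with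
`l_C(N) ≤ l_B(M) · l_C(C/m_B C)`, with equality when `B → C` is flat. -/
theorem length_baseChange_le {B C : Type*} [CommRing B] [CommRing C]
    [IsNoetherianRing B] [IsLocalRing B] [Algebra B C]
    (M : Type*) [AddCommGroup M] [Module B M]
    (hM : IsFiniteLength B M)
    (hC : IsFiniteLength C (C ⧸ (maximalIdeal B).map (algebraMap B C))) :
    (IsFiniteLength C (C ⊗[B] M) ∧
      moduleLength C (C ⊗[B] M) ≤
        moduleLength B M * moduleLength C (C ⧸ (maximalIdeal B).map (algebraMap B C))) ∧
    (Module.Flat B C →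
      moduleLength C (C ⊗[B] M) =
        moduleLength B M * moduleLength C (C ⧸ (maximalIdeal B).map (algebraMap B C))) := by
  set J : Ideal C := (maximalIdeal B).map (algebraMap B C) with hJ
  set q : ℕ∞ := mlen C (C ⧸ J) with hq
  suffices H : (IsFiniteLength C (C ⊗[B] M) ∧ mlen C (C ⊗[B] M) ≤ mlen B M * q) ∧
      (Module.Flat B C → mlen C (C ⊗[B] M) = mlen B M * q) by
    obtain ⟨⟨hfin, hle⟩, heq⟩ := H
    rw [moduleLength_eq_mlen, moduleLength_eq_mlen, moduleLength_eq_mlen (R := C) (M := C ⧸ J),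
      ← WithBot.coe_mul]
    exact ⟨⟨hfin, WithBot.coe_le_coe.mpr hle⟩,
      fun hflat => WithBot.coe_inj.mpr (heq hflat)⟩
  induction hM with
  | @of_subsingleton M' _ _ _ =>
    have hsub : Subsingleton (C ⊗[B] M') := by
      refine subsingleton_of_forall_eq 0 fun x => ?_
      induction x using TensorProduct.induction_on with
      | zero => rfl
      | tmul c m => rw [Subsingleton.elim m 0, TensorProduct.tmul_zero]
      | add x y hx hy => rw [hx, hy, add_zero]
    refine ⟨⟨.of_subsingleton, ?_⟩, fun _ => ?_⟩ <;>
      rw [mlen_eq_zero, mlen_eq_zero, zero_mul]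
  | @of_simple_quotient M' _ _ P hsimple hN ih =>
    obtain ⟨⟨ihfin, ihle⟩, iheq⟩ := ih
    -- the exact sequence  C ⊗ P → C ⊗ M' → C ⊗ (M'/P) → 0
    set f : C ⊗[B] P →ₗ[C] C ⊗[B] M' := (P.subtype).baseChange C with hf
    set g : C ⊗[B] M' →ₗ[C] C ⊗[B] (M' ⧸ P) := (P.mkQ).baseChange C with hg
    have hgfun : (⇑g : C ⊗[B] M' → C ⊗[B] (M' ⧸ P)) = ⇑(LinearMap.lTensor C P.mkQ) :=
      LinearMap.baseChange_eq_ltensor _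
    have hffun : (⇑f : C ⊗[B] ↥P → C ⊗[B] M') = ⇑(LinearMap.lTensor C P.subtype) :=
      LinearMap.baseChange_eq_ltensor _
    have hker : LinearMap.ker g = LinearMap.range f := by
      ext x
      rw [LinearMap.mem_ker, LinearMap.mem_range]
      simp only [hgfun, hffun]
      show x ∈ LinearMap.ker (LinearMap.lTensor C P.mkQ) ↔
        x ∈ LinearMap.range (LinearMap.lTensor C P.subtype)
      rw [lTensor_mkQ (Q := C) P]
    have hgsurj : Function.Surjective g := by
      rw [hgfun]
      exact LinearMap.lTensor_surjective C (Submodule.mkQ_surjective P)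
    have equot : ((C ⊗[B] M') ⧸ LinearMap.range f) ≃ₗ[C] C ⊗[B] (M' ⧸ P) :=
      (Submodule.quotEquivOfEq _ _ hker.symm).trans (g.quotKerEquivOfSurjective hgsurj)
    -- the residue field identification
    have hres : ∃ e : (M' ⧸ P) ≃ₗ[B] B ⧸ (maximalIdeal B), True := by
      obtain ⟨I, hImax, ⟨e⟩⟩ := isSimpleModule_iff_quot_maximal.mp hsimple
      rw [IsLocalRing.eq_maximalIdeal hImax] at e
      exact ⟨e, trivial⟩
    obtain ⟨eres, -⟩ := hres
    have eCres : C ⊗[B] (M' ⧸ P) ≃ₗ[C] C ⧸ J :=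
      (eres.baseChange B C _ _).trans (tensorQuotEquiv (maximalIdeal B))
    have hqres : mlen C (C ⊗[B] (M' ⧸ P)) = q := mlen_eq_of_linearEquiv eCres
    -- additivity
    have hadd : mlen C (C ⊗[B] M') = mlen C (LinearMap.range f) + q := by
      rw [mlen_additive (LinearMap.range f), mlen_eq_of_linearEquiv equot, hqres]
    -- lengths over B
    have hBadd : mlen B M' = mlen B P + 1 := by
      rw [mlen_additive P, mlen_eq_one (R := B) (M := M' ⧸ P)]
    have hrange_le : mlen C (LinearMap.range f) ≤ mlen C (C ⊗[B] P) :=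
      mlen_le_of_surjective f.rangeRestrict f.surjective_rangeRestrict
    constructor
    · constructor
      · -- finiteness
        apply isFiniteLength_of_submodule_quotient (LinearMap.range f)
        · exact isFiniteLength_of_surjective f.rangeRestrict f.surjective_rangeRestrict ihfin
        · exact equot.symm.isFiniteLength (eCres.symm.isFiniteLength hC)
      · -- inequality
        rw [hadd, hBadd, add_mul, one_mul]
        exact add_le_add (hrange_le.trans ihle) le_rfl
    · intro hflat
      have hinj : Function.Injective f := by
        rw [hffun]
        exact Module.Flat.lTensor_preserves_injective_linearMap _
          (Submodule.injective_subtype P)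
      have hrange_eq : mlen C (LinearMap.range f) = mlen C (C ⊗[B] P) :=
        (mlen_eq_of_linearEquiv (LinearEquiv.ofInjective f hinj)).symm
      rw [hadd, hBadd, add_mul, one_mul, hrange_eq, iheq hflat]
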